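/- Let B be an m×m matrix over F_2 with irreducible characteristic polynomial p of Fibonacci index 2^m + 1. Then the map j ↦ F_{j+1}(B)·F_j(B)^{-1} for 1 ≤ j ≤ 2^m, together with the formal value for j = 0, takes 2^m distinct values; in particular the matrices F_{j+1}(B)·F_j(B)^{-1} for 1 ≤ j ≤ 2^m are pairwise distinct. -/
import Mathlib
open Polynomial Matrix

noncomputable def fibPoly (R : Type*) [CommRing R] : ℕ → Polynomial R
  | 0 => 0
  | 1 => 1
  | (n + 2) => X * fibPoly R (n + 1) + fibPoly R n

lemma fibPoly_add_two (R : Type*) [CommRing R] (n : ℕ) :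
    fibPoly R (n + 2) = X * fibPoly R (n + 1) + fibPoly R n := rfl

lemma fib_id (d k : ℕ) :
    fibPoly (ZMod 2) (k + d + 1) * fibPoly (ZMod 2) k
      + fibPoly (ZMod 2) (k + d) * fibPoly (ZMod 2) (k + 1) = fibPoly (ZMod 2) d := by
  induction k with
  | zero => simp [fibPoly]
  | succ k ih =>
      have h1 : k + 1 + d + 1 = (k + d) + 2 := by ring
      have h2 : k + 1 + d = (k + d) + 1 := by ring
      rw [h1, h2, fibPoly_add_two, fibPoly_add_two]
      have two : (2 : Polynomial (ZMod 2)) = 0 := CharTwo.two_eq_zero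
      linear_combination ih + X * fibPoly (ZMod 2) (k+d+1) * fibPoly (ZMod 2) (k+1) * two

lemma isUnit_aeval_fib {m : ℕ} (B : Matrix (Fin m) (Fin m) (ZMod 2))
    (hirr : Irreducible B.charpoly) {n : ℕ}
    (hn : ¬ B.charpoly ∣ fibPoly (ZMod 2) n) :
    IsUnit (Polynomial.aeval B (fibPoly (ZMod 2) n)) := by
  obtain ⟨a, b, hab⟩ := hirr.coprime_iff_not_dvd.mpr hn
  have h := congrArg (Polynomial.aeval B) hab
  simp only [_root_.map_add, _root_.map_mul, _root_.map_one,
    Matrix.aeval_self_charpoly, mul_zero, zero_add] at h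
  have comm : Polynomial.aeval B (fibPoly (ZMod 2) n) * Polynomial.aeval B b
      = Polynomial.aeval B b * Polynomial.aeval B (fibPoly (ZMod 2) n) := by
    rw [← _root_.map_mul (Polynomial.aeval B) (fibPoly (ZMod 2) n) b,
      ← _root_.map_mul (Polynomial.aeval B) b (fibPoly (ZMod 2) n),
      mul_comm (fibPoly (ZMod 2) n) b]
  exact ⟨⟨_, Polynomial.aeval B b, comm.trans h, h⟩, rfl⟩

lemma aeval_comm {m : ℕ} (B : Matrix (Fin m) (Fin m) (ZMod 2)) (p q : Polynomial (ZMod 2)) :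
    Polynomial.aeval B p * Polynomial.aeval B q = Polynomial.aeval B q * Polynomial.aeval B p := by
  rw [← _root_.map_mul (Polynomial.aeval B) p q, ← _root_.map_mul (Polynomial.aeval B) q p,
    mul_comm p q]

lemma key {m : ℕ} (B : Matrix (Fin m) (Fin m) (ZMod 2))
    (hirr : Irreducible B.charpoly) (hm : 0 < m)
    (hleast : ∀ n : ℕ, 1 ≤ n → n < 2 ^ m + 1 → ¬ B.charpoly ∣ fibPoly (ZMod 2) n)
    (j k : ℕ) (hj2 : j ≤ 2 ^ m) (hkj : k ≤ j)
    (e : Polynomial.aeval B (fibPoly (ZMod 2) (j + 1)) * Polynomial.aeval B (fibPoly (ZMod 2) k)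
      = Polynomial.aeval B (fibPoly (ZMod 2) (k + 1)) * Polynomial.aeval B (fibPoly (ZMod 2) j)) :
    j = k := by
  by_contra hne
  haveI : Nonempty (Fin m) := ⟨⟨0, hm⟩⟩
  set d := j - k with hd
  have hd1 : 1 ≤ d := by omega
  have hjd : k + d = j := by omega
  have hid := fib_id d k
  have h2 := congrArg (Polynomial.aeval B) hid
  rw [hjd] at h2
  simp only [_root_.map_add, _root_.map_mul] at h2
  rw [e, aeval_comm B (fibPoly (ZMod 2) (k + 1)) (fibPoly (ZMod 2) j)] at h2
  have hz : Polynomial.aeval B (fibPoly (ZMod 2) d) = 0 := by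
    rw [← h2, ← two_smul (ZMod 2), show (2 : ZMod 2) = 0 from rfl, zero_smul]
  have hu := isUnit_aeval_fib B hirr (hleast d hd1 (by omega))
  rw [hz, isUnit_zero_iff] at hu
  exact one_ne_zero hu.symm

theorem stmt_10 (m : ℕ) (B : Matrix (Fin m) (Fin m) (ZMod 2))
    (hirr : Irreducible B.charpoly)
    (hdeg : B.charpoly.natDegree = m)
    (hdvd : B.charpoly ∣ fibPoly (ZMod 2) (2 ^ m + 1))
    (hleast : ∀ n : ℕ, 1 ≤ n → n < 2 ^ m + 1 → ¬ B.charpoly ∣ fibPoly (ZMod 2) n)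
    (j k : ℕ) (hj1 : 1 ≤ j) (hj2 : j ≤ 2 ^ m) (hk1 : 1 ≤ k) (hk2 : k ≤ 2 ^ m)
    (heq : Polynomial.aeval B (fibPoly (ZMod 2) (j + 1)) *
        (Polynomial.aeval B (fibPoly (ZMod 2) j))⁻¹ =
      Polynomial.aeval B (fibPoly (ZMod 2) (k + 1)) *
        (Polynomial.aeval B (fibPoly (ZMod 2) k))⁻¹) :
    j = k := by
  have hm : 0 < m := hdeg ▸ hirr.natDegree_pos
  have uj := isUnit_aeval_fib B hirr (hleast j hj1 (by omega))
  have uk := isUnit_aeval_fib B hirr (hleast k hk1 (by omega))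
  have dj : IsUnit (Polynomial.aeval B (fibPoly (ZMod 2) j)).det :=
    (Matrix.isUnit_iff_isUnit_det _).mp uj
  have dk : IsUnit (Polynomial.aeval B (fibPoly (ZMod 2) k)).det :=
    (Matrix.isUnit_iff_isUnit_det _).mp uk
  set aJ := Polynomial.aeval B (fibPoly (ZMod 2) (j + 1))
  set xJ := Polynomial.aeval B (fibPoly (ZMod 2) j)
  set aK := Polynomial.aeval B (fibPoly (ZMod 2) (k + 1))
  set xK := Polynomial.aeval B (fibPoly (ZMod 2) k)
  have e : aJ * xK = aK * xJ := by
    have h := congrArg (· * (xJ * xK)) heq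
    calc aJ * xK = aJ * xJ⁻¹ * (xJ * xK) := by
          rw [mul_assoc, ← mul_assoc xJ⁻¹ xJ xK, Matrix.nonsing_inv_mul _ dj, one_mul]
      _ = aK * xK⁻¹ * (xJ * xK) := h
      _ = aK * xJ := by
          rw [aeval_comm B (fibPoly (ZMod 2) j) (fibPoly (ZMod 2) k),
            mul_assoc, ← mul_assoc xK⁻¹ xK xJ, Matrix.nonsing_inv_mul _ dk, one_mul]
  rcases le_total k j with h | h
  · exact key B hirr hm hleast j k hj2 h e
  · exact (key B hirr hm hleast k j hk2 h e.symm).symm
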